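/- Under the algorithmic setting below (in particular, r(x^k) ≠ 0 for all k ≥ 0), the algorithm performs infinitely many successful or highly successful iterations; that is, the set of indices k for which pred_k > p_min(1−θ)‖d^k‖·min{‖r(x^k)‖, ‖r(x^k)‖^κ} and ρ_k > c₁ hold simultaneously is infinite. -/

import Mathlib

/-! If only finitely many iterations were successful, then from some index `M` on every
iteration is rejected: the iterate stays at `x := xᴹ`, `νₖ` is multiplied by `σ₂ > 1` at each
step and `r̄ₖ` stays bounded below, so `μₖ → ∞`. But at a fixed non-stationary `x` a large
regularization forces success. Write `d := x̂ − x` and `H := Gₖ − μₖ I`, which dominates `∇²f(x)`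
because `Λₖ ≥ 0`. The second inexactness condition gives `pred ≥ (1 + α) μ ‖d‖² / 2` and
`‖d‖ = O(1 / μ)`; the first one, with the nonexpansiveness of `prox_φ`, gives
`(1 − θ) ‖r(x)‖ ≤ (2 + ‖H‖ + μ) ‖d‖`. As `p_min < 1/2 < (1 + α)/2`, the test on `pred` passes for
large `μ`, and as `|ared − pred| = O(‖d‖²)` by Taylor's formula, `ρ → 1`. -/

open scoped RealInnerProductSpace
open Filter Metric

noncomputable section

/-- The convex subdifferential of `g` at `y`. -/
def subdiff {n : ℕ} (g : EuclideanSpace ℝ (Fin n) → ℝ) (y : EuclideanSpace ℝ (Fin n)) :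
    Set (EuclideanSpace ℝ (Fin n)) :=
  {v | ∀ z, g y + ⟪v, z - y⟫ ≤ g z}

/-- The proximity operator `prox_g(z)`, the (unique, for convex `g`) minimizer of
`y ↦ g y + (1/2)‖y − z‖²`. -/
noncomputable def proxPt {n : ℕ} (g : EuclideanSpace ℝ (Fin n) → ℝ)
    (z : EuclideanSpace ℝ (Fin n)) : EuclideanSpace ℝ (Fin n) :=
  Classical.epsilon fun p => ∀ y, g p + (1 / 2) * ‖p - z‖ ^ 2 ≤ g y + (1 / 2) * ‖y - z‖ ^ 2

/-- The residual (prox-gradient) mapping `r(x) = x − prox_φ(x − ∇f(x))`. -/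
noncomputable def resid {n : ℕ} (f φ : EuclideanSpace ℝ (Fin n) → ℝ)
    (x : EuclideanSpace ℝ (Fin n)) : EuclideanSpace ℝ (Fin n) :=
  x - proxPt φ (x - gradient f x)

/-- The smallest eigenvalue of a symmetric operator on ℝᵐ, as the infimum of its quadratic
form over the unit sphere. -/
noncomputable def lambdaMin {m : ℕ} (T : EuclideanSpace ℝ (Fin m) →L[ℝ] EuclideanSpace ℝ (Fin m)) :
    ℝ :=
  ⨅ u : {u : EuclideanSpace ℝ (Fin m) // ‖u‖ = 1}, ⟪T u.1, u.1⟫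

open Topology

section ConvexBounds

variable {E : Type*} [NormedAddCommGroup E] [NormedSpace ℝ E] [FiniteDimensional ℝ E]

lemma ConvexOn.continuous_of_univ {φ : E → ℝ} (hφ : ConvexOn ℝ Set.univ φ) : Continuous φ :=
  continuousOn_univ.mp (hφ.continuousOn isOpen_univ)

lemma ConvexOn.exists_sub_le_mul_norm_sub {φ : E → ℝ} (hφ : ConvexOn ℝ Set.univ φ) (x : E) :
    ∃ C, 0 ≤ C ∧ ∀ y, φ x - φ y ≤ C * ‖y - x‖ := by
  obtain ⟨w₀, -, hmax⟩ := (isCompact_closedBall x 1).exists_isMaxOn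
    ⟨x, mem_closedBall_self zero_le_one⟩ hφ.continuous_of_univ.continuousOn
  refine ⟨φ w₀ - φ x, sub_nonneg.2 (hmax (mem_closedBall_self zero_le_one)), fun y => ?_⟩
  obtain hyx | hs := (norm_nonneg (y - x)).eq_or_lt
  · rw [← hyx, sub_eq_zero.1 (norm_eq_zero.1 hyx.symm)]; simp
  -- `x` lies between `y` and the point `w` of the unit sphere opposite to `y`
  set w := x - ‖y - x‖⁻¹ • (y - x)
  have hw : φ w ≤ φ w₀ := hmax (by simp [w, norm_smul, hs.ne'])
  have hx : (1 + ‖y - x‖)⁻¹ • y + (‖y - x‖ / (1 + ‖y - x‖)) • w = x := by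
    simp only [w, smul_sub, smul_smul]
    match_scalars <;> field_simp <;> ring
  have hconv : φ ((1 + ‖y - x‖)⁻¹ • y + (‖y - x‖ / (1 + ‖y - x‖)) • w)
      ≤ (1 + ‖y - x‖)⁻¹ • φ y + (‖y - x‖ / (1 + ‖y - x‖)) • φ w :=
    hφ.2 (Set.mem_univ y) (Set.mem_univ w) (by positivity) (by positivity) (by field_simp)
  rw [hx, smul_eq_mul, smul_eq_mul] at hconv
  have key : (1 + ‖y - x‖) * φ x ≤ φ y + ‖y - x‖ * φ w := by
    have := mul_le_mul_of_nonneg_left hconv (by positivity : (0:ℝ) ≤ 1 + ‖y - x‖)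
    field_simp at this
    linarith
  nlinarith

end ConvexBounds

section Prox

variable {n : ℕ} {φ : EuclideanSpace ℝ (Fin n) → ℝ}

lemma exists_forall_prox_objective_le (hφ : ConvexOn ℝ Set.univ φ) (z : EuclideanSpace ℝ (Fin n)) :
    ∃ p, ∀ y, φ p + (1 / 2) * ‖p - z‖ ^ 2 ≤ φ y + (1 / 2) * ‖y - z‖ ^ 2 := by
  obtain ⟨C, -, hC⟩ := hφ.exists_sub_le_mul_norm_sub z
  refine (hφ.continuous_of_univ.add (by fun_prop)).exists_forall_le' z
    (mem_cocompact_of_closedBall_compl_subset z ⟨2 * |C|, fun y hy => ?_⟩)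
  rw [Set.mem_compl_iff, mem_closedBall, dist_eq_norm, not_le] at hy
  show φ z + 1 / 2 * ‖z - z‖ ^ 2 ≤ φ y + 1 / 2 * ‖y - z‖ ^ 2
  rw [sub_self, norm_zero]
  nlinarith [hC y, mul_le_mul_of_nonneg_right (le_abs_self C) (norm_nonneg (y - z)),
    mul_pos (by linarith [abs_nonneg C] : 0 < ‖y - z‖) (sub_pos.2 hy)]

lemma proxPt_objective_le (hφ : ConvexOn ℝ Set.univ φ) (z y : EuclideanSpace ℝ (Fin n)) :
    φ (proxPt φ z) + (1 / 2) * ‖proxPt φ z - z‖ ^ 2 ≤ φ y + (1 / 2) * ‖y - z‖ ^ 2 :=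
  Classical.epsilon_spec (exists_forall_prox_objective_le hφ z) y

lemma sub_proxPt_mem_subdiff (hφ : ConvexOn ℝ Set.univ φ) (z : EuclideanSpace ℝ (Fin n)) :
    z - proxPt φ z ∈ subdiff φ (proxPt φ z) := by
  intro y
  set p := proxPt φ z
  -- compare the prox objective at `p` and at `p + t • (y - p)`, then let `t → 0⁺`
  have key : ∀ t ∈ Set.Ioo (0 : ℝ) 1,
      φ p + ⟪z - p, y - p⟫ ≤ φ y + t / 2 * ‖y - p‖ ^ 2 := by
    rintro t ⟨ht0, ht1⟩
    have hopt := proxPt_objective_le hφ z (p + t • (y - p))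
    have hconv : φ (p + t • (y - p)) ≤ (1 - t) * φ p + t * φ y := by
      rw [show p + t • (y - p) = (1 - t) • p + t • y by module]
      exact hφ.2 (Set.mem_univ p) (Set.mem_univ y) (sub_nonneg.2 ht1.le) ht0.le (by ring)
    have hnorm : ‖p + t • (y - p) - z‖ ^ 2
        = ‖p - z‖ ^ 2 - 2 * t * ⟪z - p, y - p⟫ + t ^ 2 * ‖y - p‖ ^ 2 := by
      rw [show p + t • (y - p) - z = (p - z) + t • (y - p) by abel, norm_add_sq_real,
        inner_smul_right, norm_smul, mul_pow, Real.norm_eq_abs, sq_abs, ← neg_sub z p,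
        inner_neg_left]
      ring
    rw [hnorm] at hopt
    have : t * (φ p + ⟪z - p, y - p⟫) ≤ t * (φ y + t / 2 * ‖y - p‖ ^ 2) := by nlinarith
    exact le_of_mul_le_mul_left this ht0
  refine ge_of_tendsto (f := fun t : ℝ => φ y + t / 2 * ‖y - p‖ ^ 2) (x := 𝓝[>] 0) ?_
    (eventually_of_mem (Ioo_mem_nhdsGT one_pos) key)
  exact tendsto_nhdsWithin_of_tendsto_nhds (Continuous.tendsto' (by fun_prop) _ _ (by simp))

lemma inner_sub_nonneg_of_mem_subdiff {p₁ p₂ v₁ v₂ : EuclideanSpace ℝ (Fin n)}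
    (h₁ : v₁ ∈ subdiff φ p₁) (h₂ : v₂ ∈ subdiff φ p₂) : 0 ≤ ⟪v₁ - v₂, p₁ - p₂⟫ := by
  have := add_le_add (h₁ p₂) (h₂ p₁)
  rw [← neg_sub p₁ p₂, inner_neg_right] at this
  rw [inner_sub_left]
  linarith

lemma norm_proxPt_sub_proxPt_le (hφ : ConvexOn ℝ Set.univ φ) (z₁ z₂ : EuclideanSpace ℝ (Fin n)) :
    ‖proxPt φ z₁ - proxPt φ z₂‖ ≤ ‖z₁ - z₂‖ := by
  set p₁ := proxPt φ z₁
  set p₂ := proxPt φ z₂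
  have hmono := inner_sub_nonneg_of_mem_subdiff (sub_proxPt_mem_subdiff hφ z₁)
    (sub_proxPt_mem_subdiff hφ z₂)
  rw [show z₁ - p₁ - (z₂ - p₂) = (z₁ - z₂) - (p₁ - p₂) by abel, inner_sub_left,
    real_inner_self_eq_norm_sq] at hmono
  have hcs := real_inner_le_norm (z₁ - z₂) (p₁ - p₂)
  by_contra! h
  nlinarith [norm_nonneg (z₁ - z₂)]

end Prox

section Taylor

variable {E : Type*} [NormedAddCommGroup E] [InnerProductSpace ℝ E] [FiniteDimensional ℝ E]

lemma ContDiff.exists_abs_sub_sub_inner_gradient_le {f : E → ℝ} (hf : ContDiff ℝ 2 f) (x : E) :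
    ∃ K : ℝ, ∀ y ∈ closedBall x 1, |f y - f x - ⟪gradient f x, y - x⟫| ≤ K * ‖y - x‖ ^ 2 := by
  obtain ⟨K, hK⟩ := (hf.fderiv_right (m := 1) le_rfl).contDiffOn.exists_lipschitzOnWith
    one_ne_zero (convex_closedBall x 1) (isCompact_closedBall x 1)
  refine ⟨K, fun y hy => ?_⟩
  have hball : closedBall x ‖y - x‖ ⊆ closedBall x 1 :=
    closedBall_subset_closedBall (mem_closedBall_iff_norm.1 hy)
  have hx : x ∈ closedBall x ‖y - x‖ := mem_closedBall_self (norm_nonneg _)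
  have hbound : ∀ z ∈ closedBall x ‖y - x‖, ‖fderiv ℝ f z - fderiv ℝ f x‖ ≤ K * ‖y - x‖ := by
    intro z hz
    rw [← dist_eq_norm]
    exact (hK.dist_le_mul _ (hball hz) _ (hball hx)).trans
      (mul_le_mul_of_nonneg_left (mem_closedBall.1 hz) K.2)
  have hmvt := (convex_closedBall x ‖y - x‖).norm_image_sub_le_of_norm_fderiv_le'
    (fun z _ => (hf.differentiable (by norm_num)).differentiableAt) hbound hx
    (mem_closedBall_iff_norm.2 le_rfl)
  rw [gradient, InnerProductSpace.toDual_symm_apply, ← Real.norm_eq_abs]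
  nlinarith [hmvt]

end Taylor

section Model

variable {E : Type*} [NormedAddCommGroup E] [InnerProductSpace ℝ E]

lemma abs_inner_apply_self_le (T : E →L[ℝ] E) (v : E) : |⟪v, T v⟫| ≤ ‖T‖ * ‖v‖ ^ 2 := by
  refine (abs_real_inner_le_norm _ _).trans ?_
  nlinarith [T.le_opNorm v, norm_nonneg v]

lemma norm_add_smul_id_le (H : E →L[ℝ] E) {μ : ℝ} (hμ : 0 ≤ μ) :
    ‖H + μ • ContinuousLinearMap.id ℝ E‖ ≤ ‖H‖ + μ := by
  refine (norm_add_le _ _).trans (add_le_add le_rfl ?_)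
  rw [norm_smul, Real.norm_of_nonneg hμ]
  exact mul_le_of_le_one_right hμ ContinuousLinearMap.norm_id_le

lemma inner_le_inner_add_smul_adjoint_comp [CompleteSpace E] {F : Type*} [NormedAddCommGroup F]
    [InnerProductSpace ℝ F] [CompleteSpace F] (B : E →L[ℝ] E) (A : E →L[ℝ] F) {c : ℝ}
    (hc : 0 ≤ c) (v : E) :
    ⟪v, B v⟫ ≤ ⟪v, (B + c • (ContinuousLinearMap.adjoint A).comp A) v⟫ := by
  rw [add_apply, inner_add_right, smul_apply, ContinuousLinearMap.comp_apply,
    real_inner_smul_right, ContinuousLinearMap.adjoint_inner_right, real_inner_self_eq_norm_sq]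
  nlinarith [sq_nonneg ‖A v‖]

variable [CompleteSpace E] {f φ : E → ℝ} {x y : E} {B H : E →L[ℝ] E} {μ α C : ℝ}

/-- `quadModel f φ x B` is the paper's `q_k` for `B = ∇²f(xᵏ)` and `q̂_k` for `B = G_k`. -/
def quadModel (f φ : E → ℝ) (x : E) (B : E →L[ℝ] E) (y : E) : ℝ :=
  f x + ⟪gradient f x, y - x⟫ + 1 / 2 * ⟪y - x, B (y - x)⟫ + φ y

lemma quadModel_add_smul_id :
    quadModel f φ x (H + μ • ContinuousLinearMap.id ℝ E) y
      = quadModel f φ x H y + μ / 2 * ‖y - x‖ ^ 2 := by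
  simp only [quadModel, add_apply, smul_apply,
    ContinuousLinearMap.id_apply, inner_add_right, real_inner_smul_right,
    real_inner_self_eq_norm_sq]
  ring

lemma abs_add_sub_quadModel_le {K : ℝ}
    (hK : |f y - f x - ⟪gradient f x, y - x⟫| ≤ K * ‖y - x‖ ^ 2) :
    |f y + φ y - quadModel f φ x B y| ≤ (K + ‖B‖ / 2) * ‖y - x‖ ^ 2 := by
  have hB := abs_inner_apply_self_le B (y - x)
  rw [quadModel, abs_le] at *
  constructor <;> linarith [hK.1, hK.2, hB.1, hB.2]

lemma add_sub_quadModel_ge (hH : ∀ v, ⟪v, B v⟫ ≤ ⟪v, H v⟫)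
    (hdec : α * μ / 2 * ‖y - x‖ ^ 2
      ≤ f x + φ x - quadModel f φ x (H + μ • ContinuousLinearMap.id ℝ E) y) :
    (1 + α) * μ / 2 * ‖y - x‖ ^ 2 ≤ f x + φ x - quadModel f φ x B y := by
  rw [quadModel_add_smul_id] at hdec
  simp only [quadModel] at *
  linarith [hH (y - x)]

lemma norm_sub_mul_le_of_add_sub_quadModel (hC0 : 0 ≤ C) (hC : φ x - φ y ≤ C * ‖y - x‖)
    (hdec : α * μ / 2 * ‖y - x‖ ^ 2
      ≤ f x + φ x - quadModel f φ x (H + μ • ContinuousLinearMap.id ℝ E) y) :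
    ‖y - x‖ * ((1 + α) * μ - ‖H‖) ≤ 2 * (C + ‖gradient f x‖) := by
  rw [quadModel_add_smul_id, quadModel] at hdec
  have hg := abs_le.1 (abs_real_inner_le_norm (gradient f x) (y - x))
  have hH := abs_le.1 (abs_inner_apply_self_le H (y - x))
  have hsq : ‖y - x‖ * (‖y - x‖ * ((1 + α) * μ - ‖H‖))
      ≤ ‖y - x‖ * (2 * (C + ‖gradient f x‖)) := by
    nlinarith
  rcases (norm_nonneg (y - x)).eq_or_lt with h0 | hpos
  · rw [← h0, zero_mul]; positivity
  · exact le_of_mul_le_mul_left hsq hpos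

end Model

section Step

variable {n : ℕ} {f φ : EuclideanSpace ℝ (Fin n) → ℝ}

lemma norm_resid_le (hφ : ConvexOn ℝ Set.univ φ) (x y : EuclideanSpace ℝ (Fin n))
    (G : EuclideanSpace ℝ (Fin n) →L[ℝ] EuclideanSpace ℝ (Fin n)) :
    ‖resid f φ x‖
      ≤ ‖y - proxPt φ (y - gradient f x - G (y - x))‖ + (2 + ‖G‖) * ‖y - x‖ := by
  have hprox :=
    norm_proxPt_sub_proxPt_le hφ (y - gradient f x - G (y - x)) (x - gradient f x)
  rw [show y - gradient f x - G (y - x) - (x - gradient f x) = (y - x) - G (y - x) by abel]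
    at hprox
  calc ‖resid f φ x‖
      = ‖(y - proxPt φ (y - gradient f x - G (y - x))) - (y - x)
          + (proxPt φ (y - gradient f x - G (y - x)) - proxPt φ (x - gradient f x))‖ := by
        rw [resid]; congr 1; abel
    _ ≤ ‖y - proxPt φ (y - gradient f x - G (y - x))‖ + ‖y - x‖ + (‖y - x‖ + ‖G (y - x)‖) :=
        (norm_add_le_of_le (norm_sub_le _ _) (hprox.trans (norm_sub_le _ _)))
    _ ≤ _ := by nlinarith [G.le_opNorm (y - x)]

theorem eventually_pred_gt_and_ared_gt (hf : ContDiff ℝ 2 f) (hφ : ConvexOn ℝ Set.univ φ)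
    {x : EuclideanSpace ℝ (Fin n)} (hr : resid f φ x ≠ 0)
    {H : EuclideanSpace ℝ (Fin n) →L[ℝ] EuclideanSpace ℝ (Fin n)}
    (hH : ∀ v, ⟪v, fderiv ℝ (gradient f) x v⟫ ≤ ⟪v, H v⟫)
    {θ α pmin c₁ : ℝ} (hθ' : θ < 1) (hα : 0 < α) (hpmin : 0 ≤ pmin)
    (hpmin' : pmin < 1 / 2) (hc₁ : c₁ < 1) :
    ∀ᶠ μ in atTop, ∀ y,
      ‖y - proxPt φ (y - gradient f x
          - (H + μ • ContinuousLinearMap.id ℝ (EuclideanSpace ℝ (Fin n))) (y - x))‖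
        ≤ θ * ‖resid f φ x‖ →
      α * μ / 2 * ‖y - x‖ ^ 2
        ≤ f x + φ x - quadModel f φ x (H + μ • ContinuousLinearMap.id ℝ _) y →
      pmin * (1 - θ) * ‖y - x‖ * ‖resid f φ x‖
          < f x + φ x - quadModel f φ x (fderiv ℝ (gradient f) x) y ∧
        c₁ * (f x + φ x - quadModel f φ x (fderiv ℝ (gradient f) x) y)
          < f x + φ x - (f y + φ y) := by
  obtain ⟨C, hC0, hC⟩ := hφ.exists_sub_le_mul_norm_sub x
  obtain ⟨K, hK⟩ := hf.exists_abs_sub_sub_inner_gradient_le x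
  set B := fderiv ℝ (gradient f) x
  have hr0 : 0 < ‖resid f φ x‖ := norm_pos_iff.2 hr
  filter_upwards [eventually_gt_atTop 0,
    eventually_gt_atTop ((‖H‖ + 2 * (C + ‖gradient f x‖)) / (1 + α)),
    eventually_gt_atTop (2 * pmin * (2 + ‖H‖) / (1 + α - 2 * pmin)),
    eventually_gt_atTop (2 * (K + ‖B‖ / 2) / ((1 - c₁) * (1 + α)))]
    with μ hμ hμ_step hμ_pred hμ_ratio y hR hdec
  rw [div_lt_iff₀ (by linarith)] at hμ_step hμ_pred
  rw [div_lt_iff₀ (by nlinarith)] at hμ_ratio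
  have hpred := add_sub_quadModel_ge hH hdec
  have hstep := norm_sub_mul_le_of_add_sub_quadModel hC0 (hC y) hdec
  have hres : (1 - θ) * ‖resid f φ x‖ ≤ (2 + ‖H‖ + μ) * ‖y - x‖ := by
    nlinarith [norm_resid_le (f := f) hφ x y (H + μ • ContinuousLinearMap.id ℝ _),
      norm_add_smul_id_le H hμ.le, norm_nonneg (y - x)]
  have hpos : 0 < ‖y - x‖ := by
    by_contra! h
    nlinarith [mul_le_mul_of_nonneg_left h (by positivity : 0 ≤ 2 + ‖H‖ + μ)]
  have hle : ‖y - x‖ ≤ 1 := by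
    by_contra! h
    nlinarith [mul_lt_mul_of_pos_right h
      (by linarith [norm_nonneg (gradient f x)] : 0 < (1 + α) * μ - ‖H‖)]
  have htaylor := abs_le.1 (abs_add_sub_quadModel_le (φ := φ) (B := B)
    (hK y (mem_closedBall_iff_norm.2 hle)))
  have hsq : 0 < ‖y - x‖ ^ 2 := by positivity
  constructor
  · have := mul_lt_mul_of_pos_right (by linarith : pmin * (2 + ‖H‖ + μ) < (1 + α) * μ / 2) hsq
    nlinarith [mul_le_mul_of_nonneg_left hres (mul_nonneg hpmin hpos.le)]
  · have := mul_lt_mul_of_pos_right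
      (by linarith : K + ‖B‖ / 2 < (1 - c₁) * ((1 + α) * μ / 2)) hsq
    nlinarith [mul_le_mul_of_nonneg_left hpred (by linarith : 0 ≤ 1 - c₁)]

theorem eventually_step_successful (hf : ContDiff ℝ 2 f) (hφ : ConvexOn ℝ Set.univ φ)
    {x : EuclideanSpace ℝ (Fin n)} (hr : resid f φ x ≠ 0)
    {H : EuclideanSpace ℝ (Fin n) →L[ℝ] EuclideanSpace ℝ (Fin n)}
    (hH : ∀ v, ⟪v, fderiv ℝ (gradient f) x v⟫ ≤ ⟪v, H v⟫)
    {θ α pmin c₁ τ κ : ℝ} (hθ : 0 ≤ θ) (hθ' : θ < 1) (hα : 0 < α) (hpmin : 0 ≤ pmin)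
    (hpmin' : pmin < 1 / 2) (hc₁ : c₁ < 1) :
    ∀ᶠ μ in atTop, ∀ y,
      ‖y - proxPt φ (y - gradient f x
          - (H + μ • ContinuousLinearMap.id ℝ (EuclideanSpace ℝ (Fin n))) (y - x))‖
        ≤ θ * min ‖resid f φ x‖ (‖resid f φ x‖ ^ (1 + τ)) →
      α * μ / 2 * ‖y - x‖ ^ 2
        ≤ f x + φ x - quadModel f φ x (H + μ • ContinuousLinearMap.id ℝ _) y →
      pmin * (1 - θ) * ‖y - x‖ * min ‖resid f φ x‖ (‖resid f φ x‖ ^ κ)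
          < f x + φ x - quadModel f φ x (fderiv ℝ (gradient f) x) y ∧
        c₁ < (f x + φ x - (f y + φ y))
          / (f x + φ x - quadModel f φ x (fderiv ℝ (gradient f) x) y) := by
  filter_upwards [eventually_pred_gt_and_ared_gt hf hφ hr hH hθ' hα hpmin hpmin' hc₁]
    with μ hμ y hR hdec
  obtain ⟨hpred, hared⟩ :=
    hμ y (hR.trans (mul_le_mul_of_nonneg_left (min_le_left _ _) hθ)) hdec
  have hc : 0 ≤ pmin * (1 - θ) * ‖y - x‖ :=
    mul_nonneg (mul_nonneg hpmin (by linarith)) (norm_nonneg _)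
  have hpred_pos := (mul_nonneg hc (norm_nonneg _)).trans_lt hpred
  exact ⟨(mul_le_mul_of_nonneg_left (min_le_left _ _) hc).trans_lt hpred,
    (lt_div_iff₀ hpred_pos).2 hared⟩

end Step

section Dynamics

variable {X : Type*} {x xhat : ℕ → X} {ν ρ rbar : ℕ → ℝ} {unsucc : ℕ → Prop}
  {μ : ℕ → ℝ} {σ₁ σ₂ c₂ νmin νbar η δ : ℝ}

lemma nu_pos_of_update (h0 : 0 < ν 0) (hσ₂ : 0 < σ₂) (hνmin : 0 < νmin) (hνbar : 0 < νbar)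
    (hupd : ∀ k,
      (unsucc k → x (k + 1) = x k ∧ ν (k + 1) = σ₂ * ν k) ∧
      (¬unsucc k → x (k + 1) = xhat k ∧
        (ρ k ≤ c₂ → ν (k + 1) = min (ν k) νbar) ∧
        (c₂ < ρ k → ν (k + 1) = min (max (σ₁ * ν k) νmin) νbar))) (k : ℕ) :
    0 < ν k := by
  induction k with
  | zero => exact h0
  | succ k ih =>
    by_cases hu : unsucc k
    · rw [((hupd k).1 hu).2]; positivity
    · obtain ⟨-, hsucc, hhigh⟩ := (hupd k).2 hu
      rcases le_or_gt (ρ k) c₂ with hρ | hρ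
      · rw [hsucc hρ]; exact lt_min ih hνbar
      · rw [hhigh hρ]; exact lt_min (lt_max_of_lt_right hνmin) hνbar

lemma eq_of_forall_ge_unsucc {M : ℕ} (hM : ∀ k ≥ M, unsucc k)
    (hupd : ∀ k, unsucc k → x (k + 1) = x k) : ∀ k ≥ M, x k = x M := by
  intro k hk
  induction k, hk using Nat.le_induction with
  | base => rfl
  | succ k hk ih => rw [hupd k (hM k hk), ih]

lemma rbar_induction (P : ℝ → Prop) {s : ℕ → ℝ} {M : ℕ} (hM : P (rbar M))
    (hs : ∀ k ≥ M, P (s (k + 1)))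
    (hupd : ∀ k, (s (k + 1) ≤ η * rbar k → rbar (k + 1) = s (k + 1)) ∧
      (¬s (k + 1) ≤ η * rbar k → rbar (k + 1) = rbar k)) :
    ∀ k ≥ M, P (rbar k) := by
  intro k hk
  induction k, hk using Nat.le_induction with
  | base => exact hM
  | succ k hk ih =>
    by_cases h : s (k + 1) ≤ η * rbar k
    · rw [(hupd k).1 h]; exact hs k hk
    · rw [(hupd k).2 h]; exact ih

lemma tendsto_atTop_of_eq_mul {u : ℕ → ℝ} {σ : ℝ} (hσ : 1 < σ) {M : ℕ} (hM : 0 < u M)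
    (h : ∀ k ≥ M, u (k + 1) = σ * u k) : Tendsto u atTop atTop := by
  have hgeom : ∀ j, u (j + M) = σ ^ j * u M := by
    intro j
    induction j with
    | zero => simp
    | succ j ih => rw [add_right_comm, h _ (Nat.le_add_left M j), ih, pow_succ']; ring
  rw [← tendsto_add_atTop_iff_nat M, funext hgeom]
  exact (tendsto_pow_atTop_atTop_of_one_lt hσ).atTop_mul_const hM

lemma tendsto_mu_atTop (r : X → ℝ) {M : ℕ} (hM : ∀ k ≥ M, unsucc k)
    (hupd : ∀ k, unsucc k → x (k + 1) = x k ∧ ν (k + 1) = σ₂ * ν k) (hσ₂ : 1 < σ₂)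
    (hν : ∀ k, 0 < ν k) (hr : ∀ k, 0 < r (x k)) (hrbar0 : rbar 0 = r (x 0))
    (hrbarupd : ∀ k, (r (x (k + 1)) ≤ η * rbar k → rbar (k + 1) = r (x (k + 1))) ∧
      (¬r (x (k + 1)) ≤ η * rbar k → rbar (k + 1) = rbar k))
    (hδ : 0 ≤ δ) (hμ : ∀ k, μ k = ν k * rbar k ^ δ) :
    Tendsto μ atTop atTop := by
  have hx := eq_of_forall_ge_unsucc hM fun k hk => (hupd k hk).1
  have hrbar : ∀ k ≥ 0, 0 < rbar k := rbar_induction (0 < ·) (s := fun k => r (x k))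
    (hrbar0 ▸ hr 0) (fun k _ => hr (k + 1)) hrbarupd
  -- once the iterates stop moving, `rbar` can only be reset to `r (x M)`
  have hβ : ∀ k ≥ M, min (rbar M) (r (x M)) ≤ rbar k :=
    rbar_induction (min (rbar M) (r (x M)) ≤ ·) (s := fun k => r (x k)) (min_le_left _ _)
      (fun k hk => hx (k + 1) (by omega) ▸ min_le_right _ _) hrbarupd
  have hβ0 : 0 < min (rbar M) (r (x M)) := lt_min (hrbar M M.zero_le) (hr M)
  refine tendsto_atTop_mono' _ ?_ ((tendsto_atTop_of_eq_mul hσ₂ (hν M)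
    fun k hk => (hupd k (hM k hk)).2).atTop_mul_const (Real.rpow_pos_of_pos hβ0 δ))
  filter_upwards [eventually_ge_atTop M] with k hk
  rw [hμ k]
  exact mul_le_mul_of_nonneg_left (Real.rpow_le_rpow hβ0.le (hβ k hk) hδ) (hν k).le

end Dynamics

theorem stmt_7_general {n m : ℕ}
    -- problem data: f(x) = ψ(Ax − b), F = f + φ bounded below, φ convex, ψ C²
    (ψ : EuclideanSpace ℝ (Fin m) → ℝ)
    (A : EuclideanSpace ℝ (Fin n) →L[ℝ] EuclideanSpace ℝ (Fin m))
    (b : EuclideanSpace ℝ (Fin m))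
    (φ : EuclideanSpace ℝ (Fin n) → ℝ)
    (hψ : ContDiff ℝ 2 ψ) (hφ : ConvexOn ℝ Set.univ φ)
    (f F : EuclideanSpace ℝ (Fin n) → ℝ)
    (hf : ∀ y, f y = ψ (A y - b)) (hF : ∀ y, F y = f y + φ y)
    -- algorithm parameters
    (c₁ c₂ σ₁ σ₂ η θ α a νmin ν₀ νbar δ τ pmin κ : ℝ)
    (hc₁' : c₁ < 1)
    (hσ₂ : 1 < σ₂)
    (hθ : 0 < θ) (hθ' : θ < 1)
    (hα : 0 < α) (ha : 1 ≤ a)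
    (hνmin : 0 < νmin) (hν₀a : νmin ≤ ν₀) (hν₀b : ν₀ ≤ νbar)
    (hδ0 : 0 < δ)
    (hpmin : 0 < pmin) (hpmin' : pmin < 1 / 2)
    -- iterates and regularization sequences
    (x xhat : ℕ → EuclideanSpace ℝ (Fin n)) (ν rbar μ : ℕ → ℝ)
    (hν0 : ν 0 = ν₀) (hrbar0 : rbar 0 = ‖resid f φ (x 0)‖)
    (hμ : ∀ k, μ k = ν k * rbar k ^ δ)
    -- Λ_k, H_k + μ_k I =: G_k, the models q_k, q̂_k, and the subproblem residual R_k
    (Λ : ℕ → ℝ)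
    (hΛ : ∀ k, Λ k = a * max (-(lambdaMin (fderiv ℝ (gradient ψ) (A (x k) - b)))) 0)
    (G : ℕ → EuclideanSpace ℝ (Fin n) →L[ℝ] EuclideanSpace ℝ (Fin n))
    (hG : ∀ k, G k = fderiv ℝ (gradient f) (x k)
        + Λ k • ((ContinuousLinearMap.adjoint A).comp A)
        + μ k • ContinuousLinearMap.id ℝ (EuclideanSpace ℝ (Fin n)))
    (q qhat : ℕ → EuclideanSpace ℝ (Fin n) → ℝ)
    (hq : ∀ k y, q k y = f (x k) + ⟪gradient f (x k), y - x k⟫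
        + (1 / 2) * ⟪y - x k, (fderiv ℝ (gradient f) (x k)) (y - x k)⟫ + φ y)
    (hqhat : ∀ k y, qhat k y = f (x k) + ⟪gradient f (x k), y - x k⟫
        + (1 / 2) * ⟪y - x k, (G k) (y - x k)⟫ + φ y)
    (R : ℕ → EuclideanSpace ℝ (Fin n) → EuclideanSpace ℝ (Fin n))
    (hR : ∀ k y, R k y = y - proxPt φ (y - gradient f (x k) - (G k) (y - x k)))
    -- the inexactness criteria satisfied by x̂ᵏ
    (hinex1 : ∀ k, ‖R k (xhat k)‖ ≤
        θ * min ‖resid f φ (x k)‖ (‖resid f φ (x k)‖ ^ (1 + τ)))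
    (hinex2 : ∀ k, α * μ k / 2 * ‖xhat k - x k‖ ^ 2 ≤ F (x k) - qhat k (xhat k))
    -- dᵏ, pred_k, ared_k, ρ_k
    (d : ℕ → EuclideanSpace ℝ (Fin n)) (hd : ∀ k, d k = xhat k - x k)
    (pred ared ρ : ℕ → ℝ)
    (hpred : ∀ k, pred k = F (x k) - q k (xhat k))
    (hared : ∀ k, ared k = F (x k) - F (xhat k))
    (hρ : ∀ k, ρ k = ared k / pred k)
    -- update rules (unsuccessful / successful / highly successful iterations)
    (unsucc : ℕ → Prop)
    (hunsucc : ∀ k, unsucc k ↔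
        pred k ≤ pmin * (1 - θ) * ‖d k‖ *
          min ‖resid f φ (x k)‖ (‖resid f φ (x k)‖ ^ κ) ∨ ρ k ≤ c₁)
    (hupd : ∀ k,
        (unsucc k → x (k + 1) = x k ∧ ν (k + 1) = σ₂ * ν k) ∧
        (¬unsucc k → x (k + 1) = xhat k ∧
          (ρ k ≤ c₂ → ν (k + 1) = min (ν k) νbar) ∧
          (c₂ < ρ k → ν (k + 1) = min (max (σ₁ * ν k) νmin) νbar)))
    (hrbarupd : ∀ k,
        (‖resid f φ (x (k + 1))‖ ≤ η * rbar k → rbar (k + 1) = ‖resid f φ (x (k + 1))‖) ∧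
        (¬‖resid f φ (x (k + 1))‖ ≤ η * rbar k → rbar (k + 1) = rbar k))
    -- no iterate is stationary (otherwise the algorithm terminates)
    (hrne : ∀ k, resid f φ (x k) ≠ 0)
    :
    {k : ℕ | pmin * (1 - θ) * ‖d k‖ *
        min ‖resid f φ (x k)‖ (‖resid f φ (x k)‖ ^ κ) < pred k ∧ c₁ < ρ k}.Infinite := by
  have hfC : ContDiff ℝ 2 f := by
    rw [show f = fun y => ψ (A y - b) from funext hf]
    exact hψ.comp (A.contDiff.sub contDiff_const)
  rw [← Nat.frequently_atTop_iff_infinite]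
  by_contra hfin
  obtain ⟨M, hM⟩ := eventually_atTop.1 (not_frequently.1 hfin)
  have hunsuccM : ∀ k ≥ M, unsucc k := fun k hk =>
    (hunsucc k).2 ((not_and_or.1 (hM k hk)).imp not_lt.1 not_lt.1)
  have hx := eq_of_forall_ge_unsucc hunsuccM fun k hk => ((hupd k).1 hk).1
  have hμ_lim : Tendsto μ atTop atTop :=
    tendsto_mu_atTop (fun y => ‖resid f φ y‖) hunsuccM (fun k => (hupd k).1) hσ₂
      (nu_pos_of_update (by linarith) (by linarith) hνmin (by linarith) hupd)
      (fun k => norm_pos_iff.2 (hrne k)) hrbar0 hrbarupd hδ0.le hμ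
  have hΛM : 0 ≤ Λ M := hΛ M ▸ mul_nonneg (by linarith) (le_max_right _ _)
  obtain ⟨k, hk, hkM⟩ := ((hμ_lim.eventually (eventually_step_successful hfC hφ (hrne M)
    (inner_le_inner_add_smul_adjoint_comp _ A hΛM) hθ.le hθ' hα hpmin.le hpmin' hc₁')).and
    (eventually_ge_atTop M)).exists
  have hGk : G k = fderiv ℝ (gradient f) (x M) + Λ M • (ContinuousLinearMap.adjoint A).comp A
      + μ k • ContinuousLinearMap.id ℝ _ := by
    rw [hG k, hx k hkM, hΛ k, hx k hkM, ← hΛ M]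
  refine hM k hkM ?_
  rw [hd, hρ, hpred, hared, hF, hF, hq, hx k hkM]
  refine hk (xhat k) ?_ ?_
  · simpa only [hR, hGk, hx k hkM] using hinex1 k
  · simpa only [hF, hqhat, hGk, hx k hkM, quadModel] using hinex2 k

/-- Theorem 4.4: since `r(xᵏ) ≠ 0` for all `k`, the algorithm performs infinitely many
successful or highly successful iterations, i.e. the set of `k` with
`pred_k > p_min(1−θ)‖dᵏ‖ min{‖r(xᵏ)‖, ‖r(xᵏ)‖^κ}` and `ρ_k > c₁` is infinite. -/
theorem stmt_7 {n m : ℕ}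
    -- problem data: f(x) = ψ(Ax − b), F = f + φ bounded below, φ convex, ψ C²
    (ψ : EuclideanSpace ℝ (Fin m) → ℝ)
    (A : EuclideanSpace ℝ (Fin n) →L[ℝ] EuclideanSpace ℝ (Fin m))
    (b : EuclideanSpace ℝ (Fin m))
    (φ : EuclideanSpace ℝ (Fin n) → ℝ)
    (hψ : ContDiff ℝ 2 ψ) (hφ : ConvexOn ℝ Set.univ φ)
    (f F : EuclideanSpace ℝ (Fin n) → ℝ)
    (hf : ∀ y, f y = ψ (A y - b)) (hF : ∀ y, F y = f y + φ y)
    (hFbdd : BddBelow (Set.range F))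
    -- algorithm parameters
    (c₁ c₂ σ₁ σ₂ η θ α a νmin ν₀ νbar δ τ pmin κ : ℝ)
    (hc₁ : 0 < c₁) (hc₁' : c₁ < 1) (hc₂ : c₁ < c₂) (hc₂' : c₂ < 1)
    (hσ₁ : 0 < σ₁) (hσ₁' : σ₁ < 1) (hσ₂ : 1 < σ₂)
    (hη : 0 < η) (hη' : η < 1) (hθ : 0 < θ) (hθ' : θ < 1)
    (hα : 0 < α) (hα' : α < 1) (ha : 1 ≤ a)
    (hνmin : 0 < νmin) (hν₀a : νmin ≤ ν₀) (hν₀b : ν₀ ≤ νbar)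
    (hδ0 : 0 < δ) (hδ1 : δ ≤ 1) (hτ : δ ≤ τ)
    (hpmin : 0 < pmin) (hpmin' : pmin < 1 / 2) (hκ : 1 + δ < κ)
    -- iterates and regularization sequences
    (x xhat : ℕ → EuclideanSpace ℝ (Fin n)) (ν rbar μ : ℕ → ℝ)
    (hν0 : ν 0 = ν₀) (hrbar0 : rbar 0 = ‖resid f φ (x 0)‖)
    (hμ : ∀ k, μ k = ν k * rbar k ^ δ)
    -- Λ_k, H_k + μ_k I =: G_k, the models q_k, q̂_k, and the subproblem residual R_k
    (Λ : ℕ → ℝ)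
    (hΛ : ∀ k, Λ k = a * max (-(lambdaMin (fderiv ℝ (gradient ψ) (A (x k) - b)))) 0)
    (G : ℕ → EuclideanSpace ℝ (Fin n) →L[ℝ] EuclideanSpace ℝ (Fin n))
    (hG : ∀ k, G k = fderiv ℝ (gradient f) (x k)
        + Λ k • ((ContinuousLinearMap.adjoint A).comp A)
        + μ k • ContinuousLinearMap.id ℝ (EuclideanSpace ℝ (Fin n)))
    (q qhat : ℕ → EuclideanSpace ℝ (Fin n) → ℝ)
    (hq : ∀ k y, q k y = f (x k) + ⟪gradient f (x k), y - x k⟫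
        + (1 / 2) * ⟪y - x k, (fderiv ℝ (gradient f) (x k)) (y - x k)⟫ + φ y)
    (hqhat : ∀ k y, qhat k y = f (x k) + ⟪gradient f (x k), y - x k⟫
        + (1 / 2) * ⟪y - x k, (G k) (y - x k)⟫ + φ y)
    (R : ℕ → EuclideanSpace ℝ (Fin n) → EuclideanSpace ℝ (Fin n))
    (hR : ∀ k y, R k y = y - proxPt φ (y - gradient f (x k) - (G k) (y - x k)))
    -- the inexactness criteria satisfied by x̂ᵏ
    (hinex1 : ∀ k, ‖R k (xhat k)‖ ≤
        θ * min ‖resid f φ (x k)‖ (‖resid f φ (x k)‖ ^ (1 + τ)))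
    (hinex2 : ∀ k, α * μ k / 2 * ‖xhat k - x k‖ ^ 2 ≤ F (x k) - qhat k (xhat k))
    -- dᵏ, pred_k, ared_k, ρ_k
    (d : ℕ → EuclideanSpace ℝ (Fin n)) (hd : ∀ k, d k = xhat k - x k)
    (pred ared ρ : ℕ → ℝ)
    (hpred : ∀ k, pred k = F (x k) - q k (xhat k))
    (hared : ∀ k, ared k = F (x k) - F (xhat k))
    (hρ : ∀ k, ρ k = ared k / pred k)
    -- update rules (unsuccessful / successful / highly successful iterations)
    (unsucc : ℕ → Prop)
    (hunsucc : ∀ k, unsucc k ↔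
        pred k ≤ pmin * (1 - θ) * ‖d k‖ *
          min ‖resid f φ (x k)‖ (‖resid f φ (x k)‖ ^ κ) ∨ ρ k ≤ c₁)
    (hupd : ∀ k,
        (unsucc k → x (k + 1) = x k ∧ ν (k + 1) = σ₂ * ν k) ∧
        (¬unsucc k → x (k + 1) = xhat k ∧
          (ρ k ≤ c₂ → ν (k + 1) = min (ν k) νbar) ∧
          (c₂ < ρ k → ν (k + 1) = min (max (σ₁ * ν k) νmin) νbar)))
    (hrbarupd : ∀ k,
        (‖resid f φ (x (k + 1))‖ ≤ η * rbar k → rbar (k + 1) = ‖resid f φ (x (k + 1))‖) ∧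
        (¬‖resid f φ (x (k + 1))‖ ≤ η * rbar k → rbar (k + 1) = rbar k))
    -- no iterate is stationary (otherwise the algorithm terminates)
    (hrne : ∀ k, resid f φ (x k) ≠ 0)
    :
    {k : ℕ | pmin * (1 - θ) * ‖d k‖ *
        min ‖resid f φ (x k)‖ (‖resid f φ (x k)‖ ^ κ) < pred k ∧ c₁ < ρ k}.Infinite :=
  stmt_7_general ψ A b φ hψ hφ f F hf hF c₁ c₂ σ₁ σ₂ η θ α a νmin ν₀ νbar δ τ pmin κ hc₁' hσ₂ hθ hθ'
    hα ha hνmin hν₀a hν₀b hδ0 hpmin hpmin' x xhat ν rbar μ hν0 hrbar0 hμ Λ hΛ G hG q qhat hq hqhat R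
    hR hinex1 hinex2 d hd pred ared ρ hpred hared hρ unsucc hunsucc hupd hrbarupd hrne
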